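/- arXiv:1404.5070 — 3 statements merged into one kernel-verified Lean document; each statement's English description precedes it below -/
import Mathlib

section
/- There exists an absolute constant C > 0 such that for every prime p, every s₀ ∈ F_p, and all real numbers X, Y ≥ 1, the number of pairs (x, y) of positive integers with x ≤ X, y ≤ Y, gcd(x, y) = 1 and x ≡ s₀·y (mod p) is at most C·(1 + X·Y/p). -/
private lemma det_fiber_card_le {a b fx : ℕ} (ha : 0 < a) (hab : Nat.Coprime a b) (k : ℤ)
    (F : Finset (ℕ × ℕ)) (hmem : ∀ v ∈ F, v.1 ≤ fx ∧ (a:ℤ) * v.2 - (b:ℤ) * v.1 = k) :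
    F.card ≤ fx / a + 1 := by
  have h : F.card ≤ (Finset.range (fx / a + 1)).card := by
    apply Finset.card_le_card_of_injOn (fun v => v.1 / a)
    · intro v hv
      simp only [Finset.mem_coe, Finset.mem_range]
      exact Nat.lt_succ_of_le (Nat.div_le_div_right (hmem v hv).1)
    · intro v hv w hw hq
      simp only [Finset.mem_coe] at hv hw
      obtain ⟨-, hkv⟩ := hmem v hv
      obtain ⟨-, hkw⟩ := hmem w hw
      have hco : IsCoprime (a:ℤ) (b:ℤ) := Nat.isCoprime_iff_coprime.mpr hab
      have hd : (a:ℤ) ∣ (b:ℤ) * ((v.1:ℤ) - w.1) :=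
        ⟨(v.2:ℤ) - w.2, by linear_combination hkw - hkv⟩
      have hd2 : (a:ℤ) ∣ (v.1:ℤ) - (w.1:ℤ) := hco.dvd_of_dvd_mul_left hd
      have hmodeq : v.1 ≡ w.1 [MOD a] := by
        rw [Nat.modEq_iff_dvd]
        exact dvd_sub_comm.mp hd2
      have hm : v.1 % a = w.1 % a := hmodeq
      have hx : v.1 = w.1 := by
        calc v.1 = a * (v.1 / a) + v.1 % a := (Nat.div_add_mod v.1 a).symm
          _ = a * (w.1 / a) + w.1 % a := by
              have hq' : v.1 / a = w.1 / a := hq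
              rw [hq', hm]
          _ = w.1 := Nat.div_add_mod w.1 a
      have hy : v.2 = w.2 := by
        have h1 : (a:ℤ) * v.2 = (a:ℤ) * w.2 := by
          rw [hx] at hkv
          linarith [hkv, hkw]
        have h2 := mul_left_cancel₀ (by exact_mod_cast ha.ne' : (a:ℤ) ≠ 0) h1
        exact_mod_cast h2
      exact Prod.ext hx hy
  simpa using h

set_option maxHeartbeats 1000000 in
/-- Lemma 2: for any `s₀ ∈ F_p` the number of solutions of `x ≡ s₀·y (mod p)` in positive
coprime integers `x ≤ X`, `y ≤ Y` is `O(1 + X·Y/p)`. -/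
theorem stmt_10 :
    ∃ C : ℝ, 0 < C ∧ ∀ p : ℕ, p.Prime → ∀ s₀ : ZMod p, ∀ X Y : ℝ, 1 ≤ X → 1 ≤ Y →
      ({xy : ℕ × ℕ | 0 < xy.1 ∧ 0 < xy.2 ∧ (xy.1 : ℝ) ≤ X ∧ (xy.2 : ℝ) ≤ Y ∧
          Nat.gcd xy.1 xy.2 = 1 ∧ (xy.1 : ZMod p) = s₀ * (xy.2 : ZMod p)}.ncard : ℝ)
        ≤ C * (1 + X * Y / (p : ℝ)) := by
  refine ⟨5, by norm_num, ?_⟩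
  intro p hp s₀ X Y hX hY
  have hp0 : 0 < p := hp.pos
  have hP : (0:ℝ) < (p:ℝ) := by exact_mod_cast hp0
  have hX0 : (0:ℝ) ≤ X := by linarith
  have hY0 : (0:ℝ) ≤ Y := by linarith
  have hXYP : (0:ℝ) ≤ X * Y / (p:ℝ) := by positivity
  set S : Set (ℕ × ℕ) := {xy : ℕ × ℕ | 0 < xy.1 ∧ 0 < xy.2 ∧ (xy.1 : ℝ) ≤ X ∧ (xy.2 : ℝ) ≤ Y ∧
          Nat.gcd xy.1 xy.2 = 1 ∧ (xy.1 : ZMod p) = s₀ * (xy.2 : ZMod p)} with hSdef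
  set fx := ⌊X⌋₊ with hfx
  set fy := ⌊Y⌋₊ with hfy
  have hfxX : (fx : ℝ) ≤ X := Nat.floor_le hX0
  have hfyY : (fy : ℝ) ≤ Y := Nat.floor_le hY0
  have hmemx : ∀ v ∈ S, v.1 ≤ fx ∧ v.2 ≤ fy := by
    intro v hv
    exact ⟨Nat.le_floor hv.2.2.1, Nat.le_floor hv.2.2.2.1⟩
  have hfin : S.Finite := by
    apply Set.Finite.subset (Set.finite_Icc ((1:ℕ),(1:ℕ)) (fx, fy))
    intro v hv
    have := hmemx v hv
    exact ⟨⟨hv.1, hv.2.1⟩, ⟨this.1, this.2⟩⟩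
  rcases S.eq_empty_or_nonempty with hS | ⟨u, hu⟩
  · rw [hS]
    simp only [Set.ncard_empty, Nat.cast_zero]
    nlinarith
  -- u = (a, b)
  obtain ⟨ha0, hb0, haX, hbY, hab, habc⟩ := hu
  set a := u.1 with hadef
  set b := u.2 with hbdef
  classical
  set T : Finset (ℕ × ℕ) := hfin.toFinset with hT
  have hmemT : ∀ v, v ∈ T ↔ v ∈ S := fun v => hfin.mem_toFinset
  have huT : u ∈ T := (hmemT u).2 ⟨ha0, hb0, haX, hbY, hab, habc⟩
  -- the determinant map
  set f : ℕ × ℕ → ℤ := fun v => (a : ℤ) * v.2 - (b : ℤ) * v.1 with hfdef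
  have hdvd : ∀ v ∈ T, (p : ℤ) ∣ f v := by
    intro v hv
    obtain ⟨-, -, -, -, -, hc⟩ := (hmemT v).1 hv
    rw [← ZMod.intCast_zmod_eq_zero_iff_dvd]
    simp only [hfdef]
    push_cast
    rw [hc, habc]
    ring
  have hzero : ∀ v ∈ T, f v = 0 → v = u := by
    intro v hv hfv
    obtain ⟨hx0, hy0, -, -, hg, -⟩ := (hmemT v).1 hv
    have h1 : a * v.2 = b * v.1 := by
      have h1' : (a : ℤ) * v.2 = (b : ℤ) * v.1 := by
        have h'' := hfv
        simp only [hfdef] at h''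
        linarith
      exact_mod_cast h1'
    have hco : Nat.Coprime a b := hab
    have hdvd1 : a ∣ v.1 := (Nat.Coprime.dvd_of_dvd_mul_left hco ⟨v.2, by linarith [h1]⟩)
    obtain ⟨t, ht⟩ := hdvd1
    have ht2 : v.2 = b * t := by
      have : a * v.2 = a * (b * t) := by rw [h1, ht]; ring
      exact Nat.eq_of_mul_eq_mul_left ha0 this
    have htg : Nat.gcd v.1 v.2 = t * Nat.gcd a b := by
      rw [ht, ht2, Nat.mul_comm a t, Nat.mul_comm b t, Nat.gcd_mul_left]
    have ht1 : t = 1 := by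
      rw [hg, hco] at htg
      omega
    rw [ht1, Nat.mul_one] at ht ht2
    exact Prod.ext ht ht2
  -- counting setup
  set MA := (a * fy) / p with hMAdef
  set MB := (b * fx) / p with hMBdef
  set n := min (fx / a + 1) (fy / b + 1) with hndef
  -- fiber bound
  have hfib : ∀ k ∈ (T.erase u).image f,
      ((T.erase u).filter (fun v => f v = k)).card ≤ n := by
    intro k _
    set F := (T.erase u).filter (fun v => f v = k) with hF
    have hFprop : ∀ v ∈ F, v ∈ T ∧ f v = k := by
      intro v hv
      rw [hF, Finset.mem_filter] at hv
      exact ⟨Finset.mem_of_mem_erase hv.1, hv.2⟩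
    refine le_min ?_ ?_
    · apply det_fiber_card_le ha0 hab k F
      intro v hv
      obtain ⟨hvT, hvk⟩ := hFprop v hv
      exact ⟨(hmemx v ((hmemT v).1 hvT)).1, hvk⟩
    · have hcard : F.card = (F.image Prod.swap).card :=
        (Finset.card_image_of_injective F Prod.swap_injective).symm
      rw [hcard]
      apply det_fiber_card_le hb0 (Nat.Coprime.symm hab) (-k)
      intro w hw
      obtain ⟨v, hv, hvw⟩ := Finset.mem_image.mp hw
      obtain ⟨hvT, hvk⟩ := hFprop v hv
      subst hvw
      simp only [hfdef] at hvk
      refine ⟨(hmemx v ((hmemT v).1 hvT)).2, ?_⟩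
      simp only [Prod.snd_swap, Prod.fst_swap]
      linarith
  -- image bound
  have himg : ((T.erase u).image f).card ≤ MA + MB := by
    have hpz : (0:ℤ) < (p:ℤ) := by exact_mod_cast hp0
    have h : ((T.erase u).image f).card ≤ ((Finset.Icc (-(MB:ℤ)) (MA:ℤ)).erase 0).card := by
      apply Finset.card_le_card_of_injOn (fun k => k / (p:ℤ))
      · intro k hk
        obtain ⟨v, hv, hfvk⟩ := Finset.mem_image.mp hk
        have hvT : v ∈ T := Finset.mem_of_mem_erase hv
        have hvne : v ≠ u := Finset.ne_of_mem_erase hv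
        obtain ⟨m, hm⟩ := hdvd v hvT
        rw [hfvk] at hm
        have hmk : k / (p:ℤ) = m := by
          rw [hm, Int.mul_ediv_cancel_left m (ne_of_gt hpz)]
        have hk0 : k ≠ 0 := by
          intro h0
          exact hvne (hzero v hvT (hfvk.trans h0))
        obtain ⟨hx0, hy0, -, -, -, -⟩ := (hmemT v).1 hvT
        obtain ⟨hxfx, hyfy⟩ := hmemx v ((hmemT v).1 hvT)
        have haufx : a ≤ fx := (hmemx u ((hmemT u).1 huT)).1
        have hbufy : b ≤ fy := (hmemx u ((hmemT u).1 huT)).2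
        have hkval : k = (a:ℤ) * v.2 - (b:ℤ) * v.1 := by rw [← hfvk]
        have hkub : k ≤ (a:ℤ) * fy := by
          rw [hkval]
          have h1 : (a:ℤ) * v.2 ≤ (a:ℤ) * fy := by
            have : (v.2:ℤ) ≤ (fy:ℤ) := by exact_mod_cast hyfy
            nlinarith [(by exact_mod_cast ha0 : (0:ℤ) < (a:ℤ))]
          have h2 : (0:ℤ) ≤ (b:ℤ) * v.1 := by positivity
          linarith
        have hklb : -((b:ℤ) * fx) ≤ k := by
          rw [hkval]
          have h1 : (b:ℤ) * v.1 ≤ (b:ℤ) * fx := by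
            have : (v.1:ℤ) ≤ (fx:ℤ) := by exact_mod_cast hxfx
            nlinarith [(by exact_mod_cast hb0 : (0:ℤ) < (b:ℤ))]
          have h2 : (0:ℤ) ≤ (a:ℤ) * v.2 := by positivity
          linarith
        rw [Finset.mem_coe]
        show k / (p:ℤ) ∈ _
        rw [hmk]
        rw [Finset.mem_erase, Finset.mem_Icc]
        have hMAc : (MA:ℤ) = ((a*fy : ℕ) : ℤ) / (p:ℤ) := by
          rw [hMAdef]; exact Int.natCast_ediv (a*fy) p
        have hMBc : (MB:ℤ) = ((b*fx : ℕ) : ℤ) / (p:ℤ) := by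
          rw [hMBdef]; exact Int.natCast_ediv (b*fx) p
        refine ⟨?_, ?_, ?_⟩
        · intro hm0
          rw [hm0, mul_zero] at hm
          exact hk0 hm
        · rw [hMBc, neg_le, Int.le_ediv_iff_mul_le hpz]
          have hmp : -m * (p:ℤ) = -k := by rw [hm]; ring
          have hbfx : ((b * fx : ℕ) : ℤ) = (b:ℤ) * fx := by push_cast; ring
          rw [hmp, hbfx]
          linarith
        · rw [hMAc]
          rw [Int.le_ediv_iff_mul_le hpz]
          push_cast
          calc m * (p:ℤ) = k := by rw [hm]; ring
            _ ≤ (a:ℤ) * fy := hkub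
      · intro k hk k' hk' hq
        simp only [Finset.mem_coe] at hk hk'
        obtain ⟨v, hv, hfvk⟩ := Finset.mem_image.mp hk
        obtain ⟨v', hv', hfvk'⟩ := Finset.mem_image.mp hk'
        have d1 : (p:ℤ) ∣ k := by rw [← hfvk]; exact hdvd v (Finset.mem_of_mem_erase hv)
        have d2 : (p:ℤ) ∣ k' := by rw [← hfvk']; exact hdvd v' (Finset.mem_of_mem_erase hv')
        calc k = k / (p:ℤ) * (p:ℤ) := (Int.ediv_mul_cancel d1).symm
          _ = k' / (p:ℤ) * (p:ℤ) := by
              have hq' : k / (p:ℤ) = k' / (p:ℤ) := hq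
              rw [hq']
          _ = k' := Int.ediv_mul_cancel d2
    have hcard0 : ∀ c d : ℕ, ((Finset.Icc (-(d:ℤ)) (c:ℤ)).erase 0).card = c + d := by
      intro c d
      have h0m : (0:ℤ) ∈ Finset.Icc (-(d:ℤ)) (c:ℤ) := by
        rw [Finset.mem_Icc]
        constructor <;> simp
      rw [Finset.card_erase_of_mem h0m, Int.card_Icc]
      omega
    exact h.trans (le_of_eq (hcard0 MA MB))
  -- nat count
  have hTpos : 1 ≤ T.card := Finset.card_pos.mpr ⟨u, huT⟩
  have hkey : T.card ≤ 1 + n * (MA + MB) := by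
    have h1 : (T.erase u).card ≤ n * ((T.erase u).image f).card :=
      Finset.card_le_mul_card_image (T.erase u) n hfib
    have h2 := Finset.card_erase_of_mem huT
    have h3 : n * ((T.erase u).image f).card ≤ n * (MA + MB) :=
      Nat.mul_le_mul_left n himg
    omega
  have hncard : S.ncard = T.card := by
    rw [hT]
    exact Set.ncard_eq_toFinset_card S hfin
  -- real estimates
  have hA0 : (0:ℝ) < (a:ℝ) := by exact_mod_cast ha0
  have hB0 : (0:ℝ) < (b:ℝ) := by exact_mod_cast hb0
  have hnx : (n:ℝ) ≤ X / (a:ℝ) + 1 := by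
    have h1 : n ≤ fx / a + 1 := min_le_left _ _
    have h2 : ((fx / a : ℕ):ℝ) ≤ (fx:ℝ) / (a:ℝ) := Nat.cast_div_le
    have h3 : (fx:ℝ) / (a:ℝ) ≤ X / (a:ℝ) := by gcongr
    have h4 : (n:ℝ) ≤ ((fx / a : ℕ):ℝ) + 1 := by exact_mod_cast h1
    linarith
  have hny : (n:ℝ) ≤ Y / (b:ℝ) + 1 := by
    have h1 : n ≤ fy / b + 1 := min_le_right _ _
    have h2 : ((fy / b : ℕ):ℝ) ≤ (fy:ℝ) / (b:ℝ) := Nat.cast_div_le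
    have h3 : (fy:ℝ) / (b:ℝ) ≤ Y / (b:ℝ) := by gcongr
    have h4 : (n:ℝ) ≤ ((fy / b : ℕ):ℝ) + 1 := by exact_mod_cast h1
    linarith
  have hMAr : (MA:ℝ) ≤ (a:ℝ) * Y / (p:ℝ) := by
    have h2 : ((MA : ℕ):ℝ) ≤ ((a * fy : ℕ):ℝ) / (p:ℝ) := Nat.cast_div_le
    have h3 : ((a * fy : ℕ):ℝ) = (a:ℝ) * (fy:ℝ) := by push_cast; ring
    have h4 : (a:ℝ) * (fy:ℝ) / (p:ℝ) ≤ (a:ℝ) * Y / (p:ℝ) := by gcongr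
    rw [h3] at h2
    linarith
  have hMBr : (MB:ℝ) ≤ (b:ℝ) * X / (p:ℝ) := by
    have h2 : ((MB : ℕ):ℝ) ≤ ((b * fx : ℕ):ℝ) / (p:ℝ) := Nat.cast_div_le
    have h3 : ((b * fx : ℕ):ℝ) = (b:ℝ) * (fx:ℝ) := by push_cast; ring
    have h4 : (b:ℝ) * (fx:ℝ) / (p:ℝ) ≤ (b:ℝ) * X / (p:ℝ) := by gcongr
    rw [h3] at h2
    linarith
  have hn0 : (0:ℝ) ≤ (n:ℝ) := Nat.cast_nonneg n
  have hMA0 : (0:ℝ) ≤ (MA:ℝ) := Nat.cast_nonneg MA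
  have hMB0 : (0:ℝ) ≤ (MB:ℝ) := Nat.cast_nonneg MB
  have e1 : (X / (a:ℝ) + 1) * ((a:ℝ) * Y / (p:ℝ)) ≤ 2 * (X * Y / (p:ℝ)) := by
    have heq : (X / (a:ℝ) + 1) * ((a:ℝ) * Y / (p:ℝ)) = X * Y / (p:ℝ) + (a:ℝ) * Y / (p:ℝ) := by
      field_simp
    rw [heq]
    have h5 : (a:ℝ) * Y ≤ X * Y := mul_le_mul_of_nonneg_right haX hY0
    have h6 : (a:ℝ) * Y / (p:ℝ) ≤ X * Y / (p:ℝ) := div_le_div_of_nonneg_right h5 hP.le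
    linarith
  have e2 : (Y / (b:ℝ) + 1) * ((b:ℝ) * X / (p:ℝ)) ≤ 2 * (X * Y / (p:ℝ)) := by
    have heq : (Y / (b:ℝ) + 1) * ((b:ℝ) * X / (p:ℝ)) = X * Y / (p:ℝ) + (b:ℝ) * X / (p:ℝ) := by
      field_simp
    rw [heq]
    have h5 : (b:ℝ) * X ≤ X * Y := by
      have := mul_le_mul_of_nonneg_right hbY hX0
      linarith [this]
    have h6 : (b:ℝ) * X / (p:ℝ) ≤ X * Y / (p:ℝ) := div_le_div_of_nonneg_right h5 hP.le
    linarith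
  have m1 : (n:ℝ) * (MA:ℝ) ≤ (X / (a:ℝ) + 1) * ((a:ℝ) * Y / (p:ℝ)) :=
    mul_le_mul hnx hMAr hMA0 (by positivity)
  have m2 : (n:ℝ) * (MB:ℝ) ≤ (Y / (b:ℝ) + 1) * ((b:ℝ) * X / (p:ℝ)) :=
    mul_le_mul hny hMBr hMB0 (by positivity)
  have hNr : (S.ncard : ℝ) ≤ 1 + (n:ℝ) * ((MA:ℝ) + (MB:ℝ)) := by
    rw [hncard]
    have := hkey
    have hc : ((T.card : ℕ):ℝ) ≤ ((1 + n * (MA + MB) : ℕ):ℝ) := by exact_mod_cast this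
    push_cast at hc
    linarith
  calc (S.ncard : ℝ) ≤ 1 + (n:ℝ) * ((MA:ℝ) + (MB:ℝ)) := hNr
    _ = 1 + (n:ℝ) * (MA:ℝ) + (n:ℝ) * (MB:ℝ) := by ring
    _ ≤ 1 + 2 * (X * Y / (p:ℝ)) + 2 * (X * Y / (p:ℝ)) := by linarith
    _ ≤ 5 * (1 + X * Y / (p:ℝ)) := by linarith
end

section
/- Let p be a prime and let X, Y be positive real numbers with X·Y < p. Then for any λ ∈ F_p there is at most one pair (x, y) of positive integers with x ≤ X, y ≤ Y, gcd(x, y) = 1 and x ≡ λ·y (mod p). -/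
/-- Lemma 3: if `X·Y < p` then for any `λ ∈ F_p` there is at most one solution of
`x ≡ λ·y (mod p)` in positive coprime integers `x ≤ X`, `y ≤ Y`. -/
theorem stmt_11 (p : ℕ) (hp : p.Prime) (X Y : ℝ) (hX : 0 < X) (hY : 0 < Y)
    (hXY : X * Y < p) (lam : ZMod p) :
    {xy : ℕ × ℕ | 0 < xy.1 ∧ 0 < xy.2 ∧ (xy.1 : ℝ) ≤ X ∧ (xy.2 : ℝ) ≤ Y ∧
        Nat.gcd xy.1 xy.2 = 1 ∧ (xy.1 : ZMod p) = lam * (xy.2 : ZMod p)}.Subsingleton := by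
  rintro ⟨x₁, y₁⟩ ⟨hx₁, hy₁, hX₁, hY₁, hg₁, hc₁⟩ ⟨x₂, y₂⟩ ⟨hx₂, hy₂, hX₂, hY₂, hg₂, hc₂⟩
  simp only at *
  have hlt : ∀ a b : ℕ, (a : ℝ) ≤ X → (b : ℝ) ≤ Y → a * b < p := by
    intro a b ha hb
    have : (a : ℝ) * b < p := lt_of_le_of_lt (mul_le_mul ha hb (by positivity) hX.le) hXY
    exact_mod_cast this
  have h1 : x₁ * y₂ < p := hlt _ _ hX₁ hY₂
  have h2 : x₂ * y₁ < p := hlt _ _ hX₂ hY₁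
  have hcast : ((x₁ * y₂ : ℕ) : ZMod p) = ((x₂ * y₁ : ℕ) : ZMod p) := by
    push_cast
    rw [hc₁, hc₂]; ring
  have _ : NeZero p := ⟨hp.ne_zero⟩
  have key : x₁ * y₂ = x₂ * y₁ := by
    have := congrArg ZMod.val hcast
    rwa [ZMod.val_cast_of_lt h1, ZMod.val_cast_of_lt h2] at this
  have hco : Nat.Coprime x₁ y₁ := hg₁
  have hd1 : x₁ ∣ x₂ := (Nat.Coprime.dvd_of_dvd_mul_right hco ⟨y₂, key.symm⟩)
  have hco2 : Nat.Coprime x₂ y₂ := hg₂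
  have hd2 : x₂ ∣ x₁ := (Nat.Coprime.dvd_of_dvd_mul_right hco2 ⟨y₁, key⟩)
  have hx : x₁ = x₂ := Nat.dvd_antisymm hd1 hd2
  have hy : y₁ = y₂ := by
    have := key
    rw [hx] at this
    exact (Nat.eq_of_mul_eq_mul_left hx₂ this.symm)
  simp [hx, hy]
end

section
/- Let m be a fixed positive integer and ε > 0. There exists a constant C = C(m, ε) > 0 such that for every prime p and every real L ≥ 1 with L^m < p, one has ∑_χ |∑_{1 ≤ z ≤ L} χ(z)|^{2m} ≤ C·(p − 1)·L^{m+ε}, where the outer sum runs over all Dirichlet characters χ modulo p. Equivalently, the number of 2m-tuples (x₁,…,x_m, y₁,…,y_m) of positive integers, all at most L, with x₁⋯x_m ≡ y₁⋯y_m (mod p) is at most C·L^{m+ε}. -/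
open Finset


/-- Divisor bound: for every `δ > 0` there is `C ≥ 1` with `d(n) ≤ C * n^δ`. -/
lemma divisor_bound (δ : ℝ) (hδ : 0 < δ) :
    ∃ C : ℝ, 1 ≤ C ∧ ∀ n : ℕ, 0 < n → (n.divisors.card : ℝ) ≤ C * (n : ℝ) ^ δ := by
  classical
  set K : ℝ := 1 + 2 / δ with hK
  have hK1 : 1 ≤ K := by
    have h : 0 < 2 / δ := by positivity
    rw [hK]; linarith
  set B : ℕ := ⌈(2 : ℝ) ^ (1 / δ)⌉₊ with hB
  refine ⟨K ^ (B + 1), one_le_pow₀ hK1, fun n hn => ?_⟩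
  -- key pointwise bound: for a prime `p` and exponent `a`,
  -- `(a+1) ≤ c_p * (p^a)^δ` where `c_p = K` if `p ≤ B` and `1` otherwise.
  have key : ∀ p ∈ n.primeFactors,
      ((n.factorization p + 1 : ℕ) : ℝ) ≤
        (if p ≤ B then K else 1) * ((p : ℝ) ^ (n.factorization p : ℕ)) ^ δ := by
    intro p hp
    have hpp : p.Prime := Nat.prime_of_mem_primeFactors hp
    set a : ℕ := n.factorization p
    have hp2 : (2 : ℝ) ≤ (p : ℝ) := by exact_mod_cast hpp.two_le
    have hppos : (0 : ℝ) < (p : ℝ) := by linarith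
    have hpa : ((p : ℝ) ^ a) ^ δ = ((p : ℝ) ^ δ) ^ a := by
      rw [← Real.rpow_natCast (p : ℝ) a, ← Real.rpow_mul hppos.le, mul_comm,
        Real.rpow_mul hppos.le, Real.rpow_natCast]
    by_cases hpB : p ≤ B
    · -- small prime: `(p^a)^δ ≥ 2^(aδ) ≥ 1 + aδ/2`, and `K * (1 + aδ/2) ≥ a + 1`.
      simp only [hpB, if_true]
      have h2 : ((2 : ℝ) ^ δ) ^ a ≤ ((p : ℝ) ^ δ) ^ a := by
        apply pow_le_pow_left₀ (by positivity)
        exact Real.rpow_le_rpow (by norm_num) hp2 hδ.le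
      have hexp : (1 : ℝ) + (a : ℝ) * δ / 2 ≤ ((2 : ℝ) ^ δ) ^ a := by
        have h2d : (2 : ℝ) ^ δ = Real.exp (δ * Real.log 2) := by
          rw [Real.rpow_def_of_pos (by norm_num), mul_comm]
        rw [h2d, ← Real.exp_nat_mul]
        have hlog : (0.6931471803 : ℝ) < Real.log 2 := Real.log_two_gt_d9
        have h1 : (a : ℝ) * δ / 2 + 1 ≤ Real.exp ((a : ℝ) * δ / 2) := Real.add_one_le_exp _
        have h2' : Real.exp ((a : ℝ) * δ / 2) ≤ Real.exp ((a : ℝ) * (δ * Real.log 2)) := by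
          apply Real.exp_le_exp.mpr
          have : (a : ℝ) * δ / 2 ≤ (a : ℝ) * δ * Real.log 2 := by
            nlinarith [Nat.cast_nonneg (α := ℝ) a, hδ.le, mul_nonneg (Nat.cast_nonneg (α := ℝ) a) hδ.le]
          linarith [this, mul_assoc (a : ℝ) δ (Real.log 2)]
        linarith
      have hKbound : ((a : ℝ) + 1) ≤ K * (1 + (a : ℝ) * δ / 2) := by
        have ha0 : (0 : ℝ) ≤ (a : ℝ) := Nat.cast_nonneg a
        have : K * (1 + (a : ℝ) * δ / 2) = 1 + (a : ℝ) * δ / 2 + 2 / δ + (a : ℝ) := by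
          rw [hK]; field_simp; ring
        rw [this]
        have : (0 : ℝ) ≤ (a : ℝ) * δ / 2 := by positivity
        have h2d : (0 : ℝ) < 2 / δ := by positivity
        linarith
      push_cast
      calc ((a : ℝ) + 1) ≤ K * (1 + (a : ℝ) * δ / 2) := hKbound
        _ ≤ K * (((2 : ℝ) ^ δ) ^ a) := by
            apply mul_le_mul_of_nonneg_left hexp (by linarith)
        _ ≤ K * (((p : ℝ) ^ δ) ^ a) := by
            apply mul_le_mul_of_nonneg_left h2 (by linarith)
        _ = K * (((p : ℝ) ^ a) ^ δ) := by rw [hpa]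
    · -- large prime: `p^δ ≥ 2`, so `(p^a)^δ ≥ 2^a ≥ a + 1`.
      simp only [hpB, if_false, one_mul]
      have hpB' : (2 : ℝ) ^ (1 / δ) ≤ (p : ℝ) := by
        have : (2 : ℝ) ^ (1 / δ) ≤ (B : ℝ) := Nat.le_ceil _
        have hBp : B < p := lt_of_not_ge hpB
        exact this.trans (by exact_mod_cast hBp.le)
      have h2p : (2 : ℝ) ≤ (p : ℝ) ^ δ := by
        have := Real.rpow_le_rpow (by positivity) hpB' hδ.le
        rwa [← Real.rpow_mul (by norm_num), one_div_mul_cancel hδ.ne', Real.rpow_one] at this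
      have h2a : ((a : ℕ) : ℝ) + 1 ≤ (2 : ℝ) ^ a := by
        exact_mod_cast (Nat.lt_two_pow_self (n := a))
      push_cast
      calc ((a : ℝ) + 1) ≤ (2 : ℝ) ^ a := by exact_mod_cast h2a
        _ ≤ ((p : ℝ) ^ δ) ^ a := pow_le_pow_left₀ (by norm_num) h2p a
        _ = ((p : ℝ) ^ a) ^ δ := by rw [hpa]
  -- now multiply over the prime factors
  have hd : (n.divisors.card : ℝ) = ∏ p ∈ n.primeFactors, ((n.factorization p + 1 : ℕ) : ℝ) := by
    rw [Nat.card_divisors hn.ne']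
    push_cast
    rfl
  have hnn : (n : ℝ) = ∏ p ∈ n.primeFactors, (p : ℝ) ^ (n.factorization p : ℕ) := by
    conv_lhs => rw [← Nat.factorization_prod_pow_eq_self hn.ne']
    rw [Nat.prod_factorization_eq_prod_primeFactors]
    push_cast
    rfl
  have hnr : (n : ℝ) ^ δ = ∏ p ∈ n.primeFactors, ((p : ℝ) ^ (n.factorization p : ℕ)) ^ δ := by
    rw [hnn, ← Real.finset_prod_rpow _ _ (fun p hp => by positivity) δ]
  calc (n.divisors.card : ℝ)
      = ∏ p ∈ n.primeFactors, ((n.factorization p + 1 : ℕ) : ℝ) := hd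
    _ ≤ ∏ p ∈ n.primeFactors,
          ((if p ≤ B then K else 1) * ((p : ℝ) ^ (n.factorization p : ℕ)) ^ δ) := by
        apply Finset.prod_le_prod (fun p hp => by positivity) key
    _ = (∏ p ∈ n.primeFactors, (if p ≤ B then K else 1)) *
          ∏ p ∈ n.primeFactors, ((p : ℝ) ^ (n.factorization p : ℕ)) ^ δ := by
        rw [Finset.prod_mul_distrib]
    _ ≤ K ^ (B + 1) * (n : ℝ) ^ δ := by
        rw [← hnr]
        apply mul_le_mul_of_nonneg_right _ (by positivity)
        calc (∏ p ∈ n.primeFactors, if p ≤ B then K else 1)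
            = (∏ p ∈ n.primeFactors.filter (· ≤ B), if p ≤ B then K else 1) *
              ∏ p ∈ n.primeFactors.filter (fun p => ¬ p ≤ B), if p ≤ B then K else 1 :=
              (Finset.prod_filter_mul_prod_filter_not _ _ _).symm
          _ = K ^ (n.primeFactors.filter (· ≤ B)).card := by
              rw [Finset.prod_congr rfl (fun p hp => if_pos (Finset.mem_filter.mp hp).2),
                Finset.prod_congr rfl (fun p hp => if_neg (Finset.mem_filter.mp hp).2),
                Finset.prod_const, Finset.prod_const, one_pow, mul_one]
          _ ≤ K ^ (B + 1) := by
              apply pow_le_pow_right₀ hK1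
              have : n.primeFactors.filter (· ≤ B) ⊆ Finset.range (B + 1) := fun p hp => by
                simp only [Finset.mem_range, Nat.lt_succ_iff]
                exact (Finset.mem_filter.mp hp).2
              simpa using Finset.card_le_card this


lemma tuples_with_prod (m : ℕ) (T n : ℕ) (hn : n ≠ 0) :
    ((Fintype.piFinset fun _ : Fin m => Finset.Icc 1 T).filter
        (fun y => ∏ i, y i = n)).card ≤ n.divisors.card ^ m := by
  classical
  have : ((Fintype.piFinset fun _ : Fin m => Finset.Icc 1 T).filter
        (fun y => ∏ i, y i = n)) ⊆ Fintype.piFinset fun _ : Fin m => n.divisors := by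
    intro y hy
    rw [Finset.mem_filter] at hy
    rw [Fintype.mem_piFinset]
    intro i
    rw [Nat.mem_divisors]
    exact ⟨hy.2 ▸ Finset.dvd_prod_of_mem _ (Finset.mem_univ i), hn⟩
  calc _ ≤ (Fintype.piFinset fun _ : Fin m => n.divisors).card := Finset.card_le_card this
    _ = n.divisors.card ^ m := by simp [Fintype.card_piFinset]

lemma count_bound (m : ℕ) (hm : 0 < m) (ε : ℝ) (hε : 0 < ε) :
    ∃ C : ℝ, 1 ≤ C ∧ ∀ T : ℕ, ∀ L : ℝ, 1 ≤ L → (T : ℝ) ≤ L →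
      ((((Fintype.piFinset fun _ : Fin m => Finset.Icc 1 T) ×ˢ
          (Fintype.piFinset fun _ : Fin m => Finset.Icc 1 T)).filter
          (fun v : (Fin m → ℕ) × (Fin m → ℕ) => ∏ i, v.1 i = ∏ i, v.2 i)).card : ℝ)
        ≤ C * L ^ ((m : ℝ) + ε) := by
  classical
  set δ : ℝ := ε / (m * m) with hδdef
  have hδ : 0 < δ := by
    apply div_pos hε
    positivity
  obtain ⟨C₀, hC₀, hdiv⟩ := divisor_bound δ hδ
  refine ⟨C₀ ^ m, one_le_pow₀ hC₀, fun T L hL hTL => ?_⟩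
  have hL0 : (0 : ℝ) < L := lt_of_lt_of_le one_pos hL
  set P := Fintype.piFinset fun _ : Fin m => Finset.Icc 1 T with hP
  -- each x-slice has at most `d(∏x)^m` partners
  have slice : ∀ x ∈ P, ((P.filter (fun y => ∏ i, x i = ∏ i, y i)).card : ℝ)
      ≤ C₀ ^ m * L ^ ε := by
    intro x hx
    set n : ℕ := ∏ i, x i with hn
    have hxpos : ∀ i, 0 < x i := by
      intro i
      have := Fintype.mem_piFinset.mp hx i
      exact lt_of_lt_of_le one_pos (Finset.mem_Icc.mp this).1
    have hn0 : 0 < n := Finset.prod_pos fun i _ => hxpos i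
    have hnT : (n : ℝ) ≤ L ^ (m : ℕ) := by
      have h1 : n ≤ T ^ m := by
        calc n ≤ ∏ _i : Fin m, T :=
              Finset.prod_le_prod' fun i _ => (Finset.mem_Icc.mp (Fintype.mem_piFinset.mp hx i)).2
          _ = T ^ m := by simp
      calc (n : ℝ) ≤ ((T ^ m : ℕ) : ℝ) := by exact_mod_cast h1
        _ = (T : ℝ) ^ m := by push_cast; ring
        _ ≤ L ^ m := pow_le_pow_left₀ (Nat.cast_nonneg T) hTL m
    have hfilter : (P.filter (fun y => ∏ i, x i = ∏ i, y i)).card ≤ n.divisors.card ^ m := by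
      have : (P.filter (fun y => ∏ i, x i = ∏ i, y i))
          = (P.filter (fun y => ∏ i, y i = n)) := by
        apply Finset.filter_congr
        intro y _
        simp [hn, eq_comm]
      rw [this]
      exact tuples_with_prod m T n hn0.ne'
    have hd : (n.divisors.card : ℝ) ≤ C₀ * (n : ℝ) ^ δ := hdiv n hn0
    calc ((P.filter (fun y => ∏ i, x i = ∏ i, y i)).card : ℝ)
        ≤ ((n.divisors.card : ℕ) : ℝ) ^ m := by exact_mod_cast hfilter
      _ ≤ (C₀ * (n : ℝ) ^ δ) ^ m := pow_le_pow_left₀ (Nat.cast_nonneg _) hd m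
      _ = C₀ ^ m * ((n : ℝ) ^ δ) ^ (m : ℕ) := by rw [mul_pow]
      _ = C₀ ^ m * (n : ℝ) ^ (δ * m) := by
          rw [← Real.rpow_natCast ((n : ℝ) ^ δ) m, ← Real.rpow_mul (Nat.cast_nonneg n)]
      _ ≤ C₀ ^ m * (L ^ (m : ℕ)) ^ (δ * m) := by
          apply mul_le_mul_of_nonneg_left _ (by positivity)
          exact Real.rpow_le_rpow (Nat.cast_nonneg n) hnT (by positivity)
      _ = C₀ ^ m * L ^ ε := by
          rw [← Real.rpow_natCast L m, ← Real.rpow_mul hL0.le]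
          congr 1
          congr 1
          rw [hδdef]
          field_simp
  -- sum over x
  have key : (((P ×ˢ P).filter
      (fun v : (Fin m → ℕ) × (Fin m → ℕ) => ∏ i, v.1 i = ∏ i, v.2 i)).card : ℝ)
      ≤ (P.card : ℝ) * (C₀ ^ m * L ^ ε) := by
    have hcard : ((P ×ˢ P).filter
        (fun v : (Fin m → ℕ) × (Fin m → ℕ) => ∏ i, v.1 i = ∏ i, v.2 i)).card
        = ∑ x ∈ P, (P.filter (fun y => ∏ i, x i = ∏ i, y i)).card := by
      rw [Finset.card_filter, Finset.sum_product]
      congr 1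
      ext x
      rw [Finset.card_filter]
    rw [hcard]
    push_cast
    calc (∑ x ∈ P, ((P.filter (fun y => ∏ i, x i = ∏ i, y i)).card : ℝ))
        ≤ ∑ _x ∈ P, (C₀ ^ m * L ^ ε) := Finset.sum_le_sum slice
      _ = (P.card : ℝ) * (C₀ ^ m * L ^ ε) := by rw [Finset.sum_const, nsmul_eq_mul]
  have hPcard : (P.card : ℝ) ≤ L ^ (m : ℕ) := by
    have : P.card = T ^ m := by simp [hP, Fintype.card_piFinset, Nat.card_Icc]
    rw [this]
    push_cast
    exact pow_le_pow_left₀ (Nat.cast_nonneg T) hTL m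
  calc _ ≤ (P.card : ℝ) * (C₀ ^ m * L ^ ε) := key
    _ ≤ L ^ (m : ℕ) * (C₀ ^ m * L ^ ε) := by
        apply mul_le_mul_of_nonneg_right hPcard (by positivity)
    _ = C₀ ^ m * (L ^ (m : ℕ) * L ^ ε) := by ring
    _ = C₀ ^ m * L ^ ((m : ℝ) + ε) := by
        rw [← Real.rpow_natCast L m, ← Real.rpow_add hL0]

lemma moment_eq (m p T : ℕ) [hp : Fact p.Prime] (hm : 0 < m) (hTp : T ^ m < p) :
    (∑ χ : DirichletCharacter ℂ p,
        ‖∑ z ∈ Finset.Icc 1 T, χ (z : ZMod p)‖ ^ (2 * m))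
      = (p.totient : ℝ) *
        ((((Fintype.piFinset fun _ : Fin m => Finset.Icc 1 T) ×ˢ
            (Fintype.piFinset fun _ : Fin m => Finset.Icc 1 T)).filter
            (fun v : (Fin m → ℕ) × (Fin m → ℕ) => ∏ i, v.1 i = ∏ i, v.2 i)).card : ℝ) := by
  classical
  haveI : NeZero p := ⟨hp.out.ne_zero⟩
  haveI : NeZero (Monoid.exponent (ZMod p)ˣ) := ⟨Monoid.exponent_ne_zero_of_finite⟩
  set P := Fintype.piFinset fun _ : Fin m => Finset.Icc 1 T with hP
  set S : DirichletCharacter ℂ p → ℂ := fun χ => ∑ z ∈ Finset.Icc 1 T, χ (z : ZMod p) with hS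
  -- products of tuples in `P` are positive and `< p`
  have hprod : ∀ x ∈ P, 0 < ∏ i, x i ∧ ∏ i, x i < p := by
    intro x hx
    have h1 : ∀ i, 1 ≤ x i ∧ x i ≤ T := fun i =>
      Finset.mem_Icc.mp (Fintype.mem_piFinset.mp hx i)
    constructor
    · exact Finset.prod_pos fun i _ => (h1 i).1
    · calc ∏ i, x i ≤ ∏ _i : Fin m, T := Finset.prod_le_prod' fun i _ => (h1 i).2
        _ = T ^ m := by simp
        _ < p := hTp
  have hunit : ∀ x ∈ P, IsUnit (((∏ i, x i : ℕ) : ZMod p)) := by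
    intro x hx
    obtain ⟨h0, hlt⟩ := hprod x hx
    rw [isUnit_iff_ne_zero, Ne, ZMod.natCast_eq_zero_iff]
    intro hdvd
    exact absurd (Nat.le_of_dvd h0 hdvd) (not_le.mpr hlt)
  have hcasteq : ∀ x ∈ P, ∀ y ∈ P,
      ((((∏ i, x i : ℕ) : ZMod p) = ((∏ i, y i : ℕ) : ZMod p)) ↔ ∏ i, x i = ∏ i, y i) := by
    intro x hx y hy
    constructor
    · intro h
      have := (ZMod.natCast_eq_natCast_iff _ _ _).mp h
      exact Nat.ModEq.eq_of_lt_of_lt this (hprod x hx).2 (hprod y hy).2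
    · intro h; rw [h]
  -- expand the power of the sum
  have hSm : ∀ χ : DirichletCharacter ℂ p,
      S χ ^ m = ∑ x ∈ P, χ (((∏ i, x i : ℕ) : ZMod p)) := by
    intro χ
    have : S χ ^ m = ∏ _i : Fin m, S χ := by simp
    rw [this, hS]
    rw [Finset.prod_univ_sum]
    apply Finset.sum_congr rfl
    intro x _
    rw [← map_prod]
    congr 1
    push_cast
    rfl
  -- rewrite each norm-power as `normSq (S χ ^ m)`
  have hnorm : ∀ χ : DirichletCharacter ℂ p,
      ‖S χ‖ ^ (2 * m) = Complex.normSq (S χ ^ m) := by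
    intro χ
    rw [pow_mul, map_pow Complex.normSq, Complex.normSq_eq_norm_sq]
  -- key complex computation
  have hmain : ((∑ χ : DirichletCharacter ℂ p, ‖S χ‖ ^ (2 * m) : ℝ) : ℂ)
      = ∑ x ∈ P, ∑ y ∈ P,
          (if (((∏ i, y i : ℕ) : ZMod p)) = (((∏ i, x i : ℕ) : ZMod p)) then (p.totient : ℂ)
            else 0) := by
    rw [Complex.ofReal_sum]
    calc (∑ χ : DirichletCharacter ℂ p, ((‖S χ‖ ^ (2 * m) : ℝ) : ℂ))
        = ∑ χ : DirichletCharacter ℂ p, (S χ ^ m) * (starRingEnd ℂ) (S χ ^ m) := by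
          apply Finset.sum_congr rfl
          intro χ _
          rw [Complex.mul_conj, hnorm χ]
      _ = ∑ χ : DirichletCharacter ℂ p, ∑ x ∈ P, ∑ y ∈ P,
            (χ (((∏ i, x i : ℕ) : ZMod p)) *
              (starRingEnd ℂ) (χ (((∏ i, y i : ℕ) : ZMod p)))) := by
          apply Finset.sum_congr rfl
          intro χ _
          rw [hSm χ, map_sum, Finset.sum_mul_sum]
      _ = ∑ x ∈ P, ∑ y ∈ P, ∑ χ : DirichletCharacter ℂ p,
            (χ (((∏ i, x i : ℕ) : ZMod p)) *
              (starRingEnd ℂ) (χ (((∏ i, y i : ℕ) : ZMod p)))) := by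
          rw [Finset.sum_comm]
          apply Finset.sum_congr rfl
          intro x _
          rw [Finset.sum_comm]
      _ = ∑ x ∈ P, ∑ y ∈ P,
            (if (((∏ i, y i : ℕ) : ZMod p)) = (((∏ i, x i : ℕ) : ZMod p)) then (p.totient : ℂ)
              else 0) := by
          apply Finset.sum_congr rfl
          intro x hx
          apply Finset.sum_congr rfl
          intro y hy
          have hby := hunit y hy
          calc ∑ χ : DirichletCharacter ℂ p,
                (χ (((∏ i, x i : ℕ) : ZMod p)) *
                  (starRingEnd ℂ) (χ (((∏ i, y i : ℕ) : ZMod p))))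
              = ∑ χ : DirichletCharacter ℂ p,
                  (χ (((∏ i, y i : ℕ) : ZMod p))⁻¹ * χ (((∏ i, x i : ℕ) : ZMod p))) := by
                apply Finset.sum_congr rfl
                intro χ _
                rw [mul_comm]
                congr 1
                rw [← MulChar.inv_apply', ← MulChar.star_apply']
                rfl
              _ = _ := DirichletCharacter.sum_char_inv_mul_char_eq ℂ hby _
  -- convert conditions to equality of naturals and sum up
  have hmain2 : ((∑ χ : DirichletCharacter ℂ p, ‖S χ‖ ^ (2 * m) : ℝ) : ℂ)
      = ((p.totient *
          (((P ×ˢ P).filter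
            (fun v : (Fin m → ℕ) × (Fin m → ℕ) => ∏ i, v.1 i = ∏ i, v.2 i)).card) : ℕ) : ℂ) := by
    rw [hmain]
    have : ∀ x ∈ P, ∀ y ∈ P,
        (if (((∏ i, y i : ℕ) : ZMod p)) = (((∏ i, x i : ℕ) : ZMod p)) then (p.totient : ℂ) else 0)
        = (if ∏ i, x i = ∏ i, y i then (p.totient : ℂ) else 0) := by
      intro x hx y hy
      congr 1
      rw [eq_iff_iff]
      rw [hcasteq y hy x hx]
      exact eq_comm
    rw [Finset.sum_congr rfl fun x hx => Finset.sum_congr rfl fun y hy => this x hx y hy]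
    rw [Finset.card_filter, Finset.sum_product]
    push_cast
    rw [Finset.mul_sum]
    apply Finset.sum_congr rfl
    intro x _
    rw [Finset.mul_sum]
    apply Finset.sum_congr rfl
    intro y _
    split_ifs <;> simp
  have hreal : (∑ χ : DirichletCharacter ℂ p, ‖S χ‖ ^ (2 * m))
      = ((p.totient *
          (((P ×ˢ P).filter
            (fun v : (Fin m → ℕ) × (Fin m → ℕ) => ∏ i, v.1 i = ∏ i, v.2 i)).card) : ℕ) : ℝ) := by
    exact_mod_cast hmain2
  rw [show (∑ χ : DirichletCharacter ℂ p, ‖∑ z ∈ Finset.Icc 1 T, χ (z : ZMod p)‖ ^ (2 * m))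
      = ∑ χ : DirichletCharacter ℂ p, ‖S χ‖ ^ (2 * m) from rfl, hreal]
  push_cast
  ring

/-- The moment bound used in the proofs of Theorems 3 and 4: for fixed `m` and `L^m < p`,
`∑_χ |∑_{1 ≤ z ≤ L} χ(z)|^{2m} ≤ C·(p-1)·L^{m+ε}`; equivalently, the number of `2m`-tuples of
positive integers at most `L` with `x₁⋯x_m ≡ y₁⋯y_m (mod p)` is at most `C·L^{m+ε}`. -/
theorem stmt_17 (m : ℕ) (hm : 0 < m) (ε : ℝ) (hε : 0 < ε) :
    ∃ C : ℝ, 0 < C ∧ ∀ p : ℕ, p.Prime → ∀ L : ℝ, 1 ≤ L → L ^ m < p →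
      (∑ χ : DirichletCharacter ℂ p,
          ‖∑ z ∈ Finset.Icc 1 ⌊L⌋₊, χ (z : ZMod p)‖ ^ (2 * m))
        ≤ C * ((p : ℝ) - 1) * L ^ ((m : ℝ) + ε) ∧
      ({v : (Fin m → ℕ) × (Fin m → ℕ) |
          (∀ i, 0 < v.1 i ∧ (v.1 i : ℝ) ≤ L) ∧ (∀ i, 0 < v.2 i ∧ (v.2 i : ℝ) ≤ L) ∧
          ((∏ i, v.1 i : ℕ) : ZMod p) = ((∏ i, v.2 i : ℕ) : ZMod p)}.ncard : ℝ)
        ≤ C * L ^ ((m : ℝ) + ε) := by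
  classical
  obtain ⟨C, hC1, hCount⟩ := count_bound m hm ε hε
  refine ⟨C, lt_of_lt_of_le one_pos hC1, fun p pp L hL hLp => ?_⟩
  haveI : Fact p.Prime := ⟨pp⟩
  set T : ℕ := ⌊L⌋₊ with hT
  have hL0 : (0 : ℝ) ≤ L := le_trans zero_le_one hL
  have hTL : (T : ℝ) ≤ L := Nat.floor_le hL0
  have hTp : T ^ m < p := by
    have h1 : ((T ^ m : ℕ) : ℝ) < (p : ℝ) := by
      push_cast
      calc (T : ℝ) ^ m ≤ L ^ m := pow_le_pow_left₀ (Nat.cast_nonneg T) hTL m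
        _ < p := hLp
    exact_mod_cast h1
  set P := Fintype.piFinset fun _ : Fin m => Finset.Icc 1 T with hP
  set F := ((P ×ˢ P).filter
    (fun v : (Fin m → ℕ) × (Fin m → ℕ) => ∏ i, v.1 i = ∏ i, v.2 i)) with hF
  have hNbound : ((F.card : ℕ) : ℝ) ≤ C * L ^ ((m : ℝ) + ε) := hCount T L hL hTL
  -- identify the set with the finset `F`
  have hprodlt : ∀ x : Fin m → ℕ, x ∈ P → ∏ i, x i < p := by
    intro x hx
    calc ∏ i, x i ≤ ∏ _i : Fin m, T :=
          Finset.prod_le_prod' fun i _ => (Finset.mem_Icc.mp (Fintype.mem_piFinset.mp hx i)).2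
      _ = T ^ m := by simp
      _ < p := hTp
  have hmemP : ∀ x : Fin m → ℕ, (x ∈ P ↔ ∀ i, 0 < x i ∧ (x i : ℝ) ≤ L) := by
    intro x
    rw [Fintype.mem_piFinset]
    apply forall_congr'
    intro i
    rw [Finset.mem_Icc]
    constructor
    · rintro ⟨h1, h2⟩
      exact ⟨h1, le_trans (by exact_mod_cast Nat.cast_le.mpr h2) hTL⟩
    · rintro ⟨h1, h2⟩
      exact ⟨h1, Nat.le_floor h2⟩
  have hsetF : {v : (Fin m → ℕ) × (Fin m → ℕ) |
      (∀ i, 0 < v.1 i ∧ (v.1 i : ℝ) ≤ L) ∧ (∀ i, 0 < v.2 i ∧ (v.2 i : ℝ) ≤ L) ∧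
      ((∏ i, v.1 i : ℕ) : ZMod p) = ((∏ i, v.2 i : ℕ) : ZMod p)} = (F : Set _) := by
    ext v
    simp only [Set.mem_setOf_eq, hF, Finset.coe_filter, Finset.mem_product, Set.mem_setOf_eq]
    constructor
    · rintro ⟨h1, h2, h3⟩
      have hv1 : v.1 ∈ P := (hmemP v.1).mpr h1
      have hv2 : v.2 ∈ P := (hmemP v.2).mpr h2
      refine ⟨⟨hv1, hv2⟩, ?_⟩
      have := (ZMod.natCast_eq_natCast_iff _ _ _).mp h3
      exact Nat.ModEq.eq_of_lt_of_lt this (hprodlt v.1 hv1) (hprodlt v.2 hv2)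
    · rintro ⟨⟨hv1, hv2⟩, h3⟩
      exact ⟨(hmemP v.1).mp hv1, (hmemP v.2).mp hv2, by rw [h3]⟩
  have hncard : ({v : (Fin m → ℕ) × (Fin m → ℕ) |
      (∀ i, 0 < v.1 i ∧ (v.1 i : ℝ) ≤ L) ∧ (∀ i, 0 < v.2 i ∧ (v.2 i : ℝ) ≤ L) ∧
      ((∏ i, v.1 i : ℕ) : ZMod p) = ((∏ i, v.2 i : ℕ) : ZMod p)}.ncard : ℝ) = (F.card : ℝ) := by
    rw [hsetF, Set.ncard_coe_finset]
  constructor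
  · -- moment bound
    rw [moment_eq m p T hm hTp]
    have htot : (p.totient : ℝ) = (p : ℝ) - 1 := by
      rw [Nat.totient_prime pp]
      have : 1 ≤ p := pp.one_lt.le
      push_cast [Nat.cast_sub this]
      ring
    rw [htot]
    have hp1 : (0 : ℝ) ≤ (p : ℝ) - 1 := by
      have : (1 : ℝ) ≤ (p : ℝ) := by exact_mod_cast pp.one_lt.le
      linarith
    calc ((p : ℝ) - 1) * (F.card : ℝ) ≤ ((p : ℝ) - 1) * (C * L ^ ((m : ℝ) + ε)) :=
          mul_le_mul_of_nonneg_left hNbound hp1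
      _ = C * ((p : ℝ) - 1) * L ^ ((m : ℝ) + ε) := by ring
  · rw [hncard]
    exact hNbound
end
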